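/- The function TL(T) = L(T) + C(T), where L(T) = 279.69668 + 36000.76892·T + 0.0003025·T², C(T) = (1.919460 − 0.004789·T − 0.000014·T²)·sind(M(T)) + (0.020094 − 0.0001·T)·sind(2·M(T)) + 0.000293·sind(3·M(T)), sind(x) = sin(π·x/180), and M(T) = 358.47583 + 35999.04975·T − 0.000150·T² − 0.0000033·T³, is differentiable on ℝ, and for every real T with −10 ≤ T ≤ 10 its derivative satisfies 34700 ≤ TL′(T) ≤ 37300. -/

import Mathlib

/-- Sine of an angle expressed in degrees. -/
noncomputable def sind (x : ℝ) : ℝ := Real.sin (Real.pi * x / 180)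

/-- Mean anomaly of the Sun (degrees), Newcomb's solar theory. -/
noncomputable def M (T : ℝ) : ℝ :=
  358.47583 + 35999.04975 * T - 0.000150 * T ^ 2 - 0.0000033 * T ^ 3

/-- Equation of the Sun's center (degrees). -/
noncomputable def C (T : ℝ) : ℝ :=
  (1.919460 - 0.004789 * T - 0.000014 * T ^ 2) * sind (M T)
    + (0.020094 - 0.0001 * T) * sind (2 * M T)
    + 0.000293 * sind (3 * M T)

/-- Mean longitude of the Sun (degrees). -/
noncomputable def L (T : ℝ) : ℝ :=
  279.69668 + 36000.76892 * T + 0.0003025 * T ^ 2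

/-- True longitude of the Sun (degrees). -/
noncomputable def TL (T : ℝ) : ℝ := L T + C T

/-! The derivative of the mean longitude is `L' T = 36000.76892 + 0.000605 T ≈ 36000.77` on
`[-10, 10]`. Each of the three terms `a(T) · sind (k · M T)` of the equation of the centre has
derivative at most `|a'| + |a| · (π / 180) · k · |M'|` in absolute value, and `|M'| ≤ 36000` there;
with `π < 3.15` this gives `|C'| ≤ 1270`, well inside the margin of the claimed bounds. -/

open Real

lemma HasDerivAt.sind {f : ℝ → ℝ} {f' x : ℝ} (hf : HasDerivAt f f' x) :
    HasDerivAt (fun t => sind (f t)) (Real.cos (π * f x / 180) * (π * f' / 180)) x :=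
  ((hf.const_mul π).div_const 180).sin

lemma abs_sind_le_one (x : ℝ) : |sind x| ≤ 1 := abs_sin_le_one _

lemma exists_hasDerivAt_mul_sind_abs_le {a g : ℝ → ℝ} {a' g' x A' A G : ℝ}
    (ha : HasDerivAt a a' x) (hg : HasDerivAt g g' x)
    (ha' : |a'| ≤ A') (hax : |a x| ≤ A) (hg' : |g'| ≤ G) :
    ∃ d, HasDerivAt (fun t => a t * sind (g t)) d x ∧ |d| ≤ A' + A * (π / 180 * G) := by
  refine ⟨_, ha.mul hg.sind, ?_⟩
  have hcos := abs_cos_le_one (π * g x / 180)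
  calc |a' * sind (g x) + a x * (cos (π * g x / 180) * (π * g' / 180))|
      ≤ |a' * sind (g x)| + |a x * (cos (π * g x / 180) * (π * g' / 180))| := abs_add_le _ _
    _ = |a'| * |sind (g x)| + |a x| * (|cos (π * g x / 180)| * (π / 180 * |g'|)) := by
        rw [abs_mul, abs_mul, abs_mul, abs_div, abs_mul, abs_of_pos pi_pos,
          abs_of_pos (by norm_num : (0 : ℝ) < 180)]
        ring
    _ ≤ A' * 1 + A * (1 * (π / 180 * G)) := by
        gcongr
        exacts [(abs_nonneg _).trans ha', abs_sind_le_one _, (abs_nonneg _).trans hax]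
    _ = A' + A * (π / 180 * G) := by ring

lemma hasDerivAt_L (T : ℝ) : HasDerivAt L (36000.76892 + 0.000605 * T) T := by
  refine ((((hasDerivAt_id T).const_mul 36000.76892).const_add 279.69668).add
    ((hasDerivAt_pow 2 T).const_mul 0.0003025)).congr_deriv ?_
  norm_num; ring

lemma hasDerivAt_M (T : ℝ) : HasDerivAt M (35999.04975 - 0.0003 * T - 0.0000099 * T ^ 2) T := by
  refine (((((hasDerivAt_id T).const_mul 35999.04975).const_add 358.47583).sub
    ((hasDerivAt_pow 2 T).const_mul 0.000150)).sub
    ((hasDerivAt_pow 3 T).const_mul 0.0000033)).congr_deriv ?_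
  norm_num; ring

lemma exists_hasDerivAt_C_abs_le {T : ℝ} (h₁ : -10 ≤ T) (h₂ : T ≤ 10) :
    ∃ c, HasDerivAt C c T ∧ |c| ≤ 1270 := by
  have ha₁ : HasDerivAt (fun t : ℝ => 1.919460 - 0.004789 * t - 0.000014 * t ^ 2)
      (-0.004789 - 0.000028 * T) T := by
    refine (((hasDerivAt_id T).const_mul 0.004789 |>.const_sub 1.919460).sub
      ((hasDerivAt_pow 2 T).const_mul 0.000014)).congr_deriv ?_
    norm_num; ring
  have ha₂ : HasDerivAt (fun t : ℝ => 0.020094 - 0.0001 * t) (-0.0001) T := by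
    simpa using (hasDerivAt_id T).const_mul 0.0001 |>.const_sub 0.020094
  have hM' : |35999.04975 - 0.0003 * T - 0.0000099 * T ^ 2| ≤ 36000 := by
    rw [abs_le]; constructor <;> nlinarith
  obtain ⟨d₁, hd₁, hb₁⟩ := exists_hasDerivAt_mul_sind_abs_le (A' := 0.0051) (A := 1.97)
    ha₁ (hasDerivAt_M T) (by rw [abs_le]; constructor <;> linarith)
    (by rw [abs_le]; constructor <;> nlinarith) hM'
  obtain ⟨d₂, hd₂, hb₂⟩ := exists_hasDerivAt_mul_sind_abs_le (A' := 0.0001) (A := 0.0211)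
    (G := 72000) ha₂ ((hasDerivAt_M T).const_mul 2)
    (by norm_num) (by rw [abs_le]; constructor <;> linarith)
    (by rw [abs_mul, abs_two]; linarith)
  obtain ⟨d₃, hd₃, hb₃⟩ := exists_hasDerivAt_mul_sind_abs_le (A' := 0) (A := 0.000293)
    (G := 108000) (hasDerivAt_const T 0.000293) ((hasDerivAt_M T).const_mul 3)
    (by norm_num) (by norm_num) (by rw [abs_mul, abs_of_pos three_pos]; linarith)
  refine ⟨d₁ + d₂ + d₃, (hd₁.add hd₂).add hd₃, ?_⟩
  have hπ := pi_lt_d2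
  calc |d₁ + d₂ + d₃| ≤ |d₁| + |d₂| + |d₃| := abs_add_three _ _ _
    _ ≤ 1270 := by linarith

theorem TL_differentiable_and_deriv_bounds :
    Differentiable ℝ TL ∧
    ∀ T : ℝ, -10 ≤ T → T ≤ 10 →
      34700 ≤ deriv TL T ∧ deriv TL T ≤ 37300 := by
  refine ⟨by unfold TL L C sind M; fun_prop, fun T h₁ h₂ => ?_⟩
  obtain ⟨c, hc, hbound⟩ := exists_hasDerivAt_C_abs_le h₁ h₂
  have hTL : HasDerivAt TL (36000.76892 + 0.000605 * T + c) T := (hasDerivAt_L T).add hc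
  obtain ⟨hlo, hhi⟩ := abs_le.mp hbound
  rw [hTL.deriv]
  constructor <;> linarith
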